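/- arXiv:1402.5832 — 2 statements merged into one kernel-verified Lean document; each statement's English description precedes it below -/
import Mathlib

section
/- For every μ > 0 and γ ∈ (0,1], the quantity sup over x ∈ ℤ^{dn} of the sum over y ∈ ℤ^{dn} of exp(−μ · dist_H(x,y)^γ) is finite, where dist_H is the Hausdorff distance between the n-point configurations x and y in ℝ^d. -/
/-!
Every particle `y_k` lies within `dist_H(x, y)` of some particle `x_j`, so
`exp (-μ dist_H(x, y)^γ) ≤ ∏_k ∑_j exp (-(μ/n) |x_j - y_k|^γ)`. Summing over `y` factorises the
right-hand side into the `n`-th power of `∑_z ∑_j exp (-(μ/n) |x_j - z|^γ)`, which by translation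
invariance equals `n ∑_{w ∈ ℤ^d} exp (-(μ/n) |w|^γ)` whatever `x` is. This lattice sum is
dominated by a product of `d` one-dimensional sums, each convergent by stretched-exponential decay.
-/

/-- The Hausdorff pseudo-distance between `n`-particle configurations in `ℝ^d`
(max-norm on `ℝ^d`). -/
noncomputable def distH {d n : ℕ} (x y : Fin n → (Fin d → ℝ)) : ℝ :=
  max (⨆ j, ⨅ k, dist (x j) (y k)) (⨆ k, ⨅ j, dist (x j) (y k))

/-- An integer configuration viewed as a real configuration. -/
noncomputable def intConfig {d n : ℕ} (x : Fin n → (Fin d → ℤ)) : Fin n → (Fin d → ℝ) :=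
  fun i j => (x i j : ℝ)

open Real Filter Asymptotics Finset

lemma summable_int_exp_neg_mul_norm_rpow {c γ : ℝ} (hc : 0 < c) (hγ : 0 < γ) :
    Summable fun z : ℤ => exp (-(c * ‖z‖ ^ γ)) := by
  have hdecay : (fun t : ℝ => exp (-(c * t ^ γ))) =O[atTop] fun t => t ^ (-2 : ℝ) := by
    have h := ((isLittleO_exp_neg_mul_rpow_atTop hc (-2 / γ)).comp_tendsto
      (tendsto_rpow_atTop hγ)).isBigO
    refine (h.congr' (Eventually.of_forall fun t => by simp [neg_mul]) ?_)
    filter_upwards [eventually_ge_atTop 0] with t ht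
    simp only [Function.comp_apply, ← rpow_mul ht]
    field_simp
  refine summable_of_isBigO (summable_abs_int_rpow one_lt_two) ?_
  simpa [Function.comp_def, Int.norm_eq_abs] using hdecay.comp_tendsto
    (tendsto_norm_cocompact_atTop.comp Int.tendsto_coe_cofinite)

section PiProd

variable {ι α : Type*} [Fintype ι] {f : ι → α → ℝ}

lemma sum_prod_apply_le_prod_tsum (hf₀ : ∀ i a, 0 ≤ f i a) (hf : ∀ i, Summable (f i))
    (s : Finset (ι → α)) : ∑ x ∈ s, ∏ i, f i (x i) ≤ ∏ i, ∑' a, f i a := by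
  classical
  calc ∑ x ∈ s, ∏ i, f i (x i)
      ≤ ∑ x ∈ Fintype.piFinset fun i => s.image (· i), ∏ i, f i (x i) :=
        sum_le_sum_of_subset_of_nonneg (fun x hx => Fintype.mem_piFinset.2 fun i =>
          mem_image_of_mem _ hx) fun x _ _ => prod_nonneg fun i _ => hf₀ i (x i)
    _ = ∏ i, ∑ a ∈ s.image (· i), f i a := (prod_univ_sum _ _).symm
    _ ≤ ∏ i, ∑' a, f i a := prod_le_prod (fun i _ => sum_nonneg fun a _ => hf₀ i a)
        fun i _ => (hf i).sum_le_tsum _ fun a _ => hf₀ i a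

lemma summable_prod_apply (hf₀ : ∀ i a, 0 ≤ f i a) (hf : ∀ i, Summable (f i)) :
    Summable fun x : ι → α => ∏ i, f i (x i) :=
  summable_of_sum_le (fun x => prod_nonneg fun i _ => hf₀ i (x i))
    (sum_prod_apply_le_prod_tsum hf₀ hf)

lemma tsum_prod_apply_le_prod_tsum (hf₀ : ∀ i a, 0 ≤ f i a) (hf : ∀ i, Summable (f i)) :
    ∑' x : ι → α, ∏ i, f i (x i) ≤ ∏ i, ∑' a, f i a :=
  (summable_prod_apply hf₀ hf).tsum_le_of_sum_le (sum_prod_apply_le_prod_tsum hf₀ hf)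

end PiProd

lemma summable_pi_int_exp_neg_mul_norm_rpow {ι : Type*} [Fintype ι] {c γ : ℝ} (hc : 0 < c)
    (hγ : 0 < γ) : Summable fun w : ι → ℤ => exp (-(c * ‖w‖ ^ γ)) := by
  rcases isEmpty_or_nonempty ι with _ | _
  · exact .of_finite
  set c' := c / Fintype.card ι
  have hc' : 0 < c' := by positivity
  refine (summable_prod_apply (f := fun _ z => exp (-(c' * ‖z‖ ^ γ))) (fun _ _ => (exp_pos _).le)
    fun _ => summable_int_exp_neg_mul_norm_rpow hc' hγ).of_nonneg_of_le
    (fun _ => (exp_pos _).le) fun w => ?_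
  rw [← exp_sum, exp_le_exp, sum_neg_distrib, neg_le_neg_iff]
  calc ∑ i, c' * ‖w i‖ ^ γ ≤ ∑ _i : ι, c' * ‖w‖ ^ γ := by
        gcongr with i; exact norm_le_pi_norm w i
    _ = c * ‖w‖ ^ γ := by simp only [sum_const, card_univ, nsmul_eq_mul, c']; field_simp

lemma HasSum.comp_dist {E : Type*} [SeminormedAddCommGroup E] {φ : ℝ → ℝ} {S : ℝ}
    (h : HasSum (fun w : E => φ ‖w‖) S) (v : E) : HasSum (fun z => φ (dist v z)) S :=
  (Equiv.addRight v).hasSum_iff.mp <| by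
    simpa [Function.comp_def, dist_eq_norm_sub'] using h

lemma exists_dist_le_distH {d n : ℕ} (X Y : Fin n → Fin d → ℝ) (k : Fin n) :
    ∃ j, dist (X j) (Y k) ≤ distH X Y := by
  have : Nonempty (Fin n) := ⟨k⟩
  obtain ⟨j, hj⟩ := exists_eq_ciInf_of_finite (f := fun j => dist (X j) (Y k))
  refine ⟨j, hj ▸ ?_⟩
  exact (le_ciSup (f := fun k => ⨅ j, dist (X j) (Y k)) (Finite.bddAbove_range _) k).trans
    (le_max_right _ _)

lemma exp_neg_mul_distH_rpow_le_prod {d n : ℕ} (hn : n ≠ 0) {μ γ : ℝ} (hμ : 0 ≤ μ)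
    (hγ : 0 ≤ γ) (X Y : Fin n → Fin d → ℝ) :
    exp (-μ * distH X Y ^ γ) ≤ ∏ k, ∑ j, exp (-(μ / n * dist (X j) (Y k) ^ γ)) := by
  calc exp (-μ * distH X Y ^ γ) = ∏ _k : Fin n, exp (-(μ / n * distH X Y ^ γ)) := by
        rw [← exp_sum]; simp [field]
    _ ≤ ∏ k, ∑ j, exp (-(μ / n * dist (X j) (Y k) ^ γ)) := by
        refine prod_le_prod (fun _ _ => (exp_pos _).le) fun k _ => ?_
        obtain ⟨j, hj⟩ := exists_dist_le_distH X Y k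
        calc exp (-(μ / n * distH X Y ^ γ)) ≤ exp (-(μ / n * dist (X j) (Y k) ^ γ)) := by
              gcongr
          _ ≤ ∑ j, exp (-(μ / n * dist (X j) (Y k) ^ γ)) :=
              single_le_sum (f := fun j => exp (-(μ / n * dist (X j) (Y k) ^ γ)))
                (fun _ _ => (exp_pos _).le) (mem_univ j)

lemma dist_intConfig {d n : ℕ} (x y : Fin n → Fin d → ℤ) (j k : Fin n) :
    dist (intConfig x j) (intConfig y k) = dist (x j) (y k) :=
  (Isometry.piMap (fun _ => Int.cast) fun _ => Real.isometry_intCast).dist_eq (x j) (y k)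

theorem summable_exp_neg_distH_general {d n : ℕ} (hn : 1 ≤ n)
    (μ : ℝ) (hμ : 0 < μ) (γ : ℝ) (hγ : γ ∈ Set.Ioc (0 : ℝ) 1) :
    (∀ x : Fin n → (Fin d → ℤ),
      Summable fun y : Fin n → (Fin d → ℤ) =>
        Real.exp (-μ * distH (intConfig x) (intConfig y) ^ γ)) ∧
    ∃ C : ℝ, ∀ x : Fin n → (Fin d → ℤ),
      (∑' y : Fin n → (Fin d → ℤ),
        Real.exp (-μ * distH (intConfig x) (intConfig y) ^ γ)) ≤ C := by
  set c := μ / n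
  have hc : 0 < c := div_pos hμ (by exact_mod_cast hn)
  obtain ⟨S, hS⟩ := summable_pi_int_exp_neg_mul_norm_rpow (ι := Fin d) hc hγ.1
  let g (x : Fin n → Fin d → ℤ) (z : Fin d → ℤ) : ℝ := ∑ j, exp (-(c * dist (x j) z ^ γ))
  have hg (x) : HasSum (g x) (n * S) := by
    simpa using hasSum_sum (s := univ) fun j _ =>
      hS.comp_dist (φ := fun t => exp (-(c * t ^ γ))) (x j)
  have hg₀ (x) (z) : 0 ≤ g x z := sum_nonneg fun _ _ => (exp_pos _).le
  have hbound (x y : Fin n → Fin d → ℤ) :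
      exp (-μ * distH (intConfig x) (intConfig y) ^ γ) ≤ ∏ k, g x (y k) := by
    simpa only [dist_intConfig] using
      exp_neg_mul_distH_rpow_le_prod (by omega) hμ.le hγ.1.le (intConfig x) (intConfig y)
  have hprod (x) : Summable fun y : Fin n → Fin d → ℤ => ∏ k, g x (y k) :=
    summable_prod_apply (fun _ => hg₀ x) fun _ => (hg x).summable
  have hsum (x) : Summable fun y : Fin n → Fin d → ℤ =>
      exp (-μ * distH (intConfig x) (intConfig y) ^ γ) :=
    (hprod x).of_nonneg_of_le (fun _ => (exp_pos _).le) (hbound x)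
  refine ⟨hsum, (n * S) ^ n, fun x => ?_⟩
  calc ∑' y, exp (-μ * distH (intConfig x) (intConfig y) ^ γ)
      ≤ ∑' y : Fin n → Fin d → ℤ, ∏ k, g x (y k) := (hsum x).tsum_le_tsum (hbound x) (hprod x)
    _ ≤ ∏ _k : Fin n, ∑' z, g x z :=
        tsum_prod_apply_le_prod_tsum (fun _ => hg₀ x) fun _ => (hg x).summable
    _ = (n * S) ^ n := by simp [(hg x).tsum_eq]

theorem summable_exp_neg_distH {d n : ℕ} (hd : 1 ≤ d) (hn : 1 ≤ n)
    (μ : ℝ) (hμ : 0 < μ) (γ : ℝ) (hγ : γ ∈ Set.Ioc (0 : ℝ) 1) :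
    (∀ x : Fin n → (Fin d → ℤ),
      Summable fun y : Fin n → (Fin d → ℤ) =>
        Real.exp (-μ * distH (intConfig x) (intConfig y) ^ γ)) ∧
    ∃ C : ℝ, ∀ x : Fin n → (Fin d → ℤ),
      (∑' y : Fin n → (Fin d → ℤ),
        Real.exp (-μ * distH (intConfig x) (intConfig y) ^ γ)) ≤ C :=
  summable_exp_neg_distH_general hn μ hμ γ hγ
end

section
/- Let x_1, ..., x_n be points in ℝ^d (with the max-norm) whose diameter max_{j,k} |x_j − x_k| is at least L > 0. Then there exists a partition of {1,...,n} into two nonempty disjoint sets J and K such that |x_j − x_k| ≥ L/n for all j ∈ J and k ∈ K. -/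
open Finset

/-!
Some coordinate separates two of the points by at least `L`, so it suffices to work on the line.
There, starting from the smaller of the two values `y a`, the `n` open intervals
`(y a + i L/n, y a + (i+1) L/n)` are pairwise disjoint and none contains `y a`, so the
other `n - 1` points leave one of them empty. Cutting the points at that empty interval
gives the partition.
-/

lemma exists_le_dist_apply_of_le_dist {ι : Type*} [Fintype ι] {β : ι → Type*}
    [∀ i, PseudoMetricSpace (β i)] {f g : ∀ i, β i} {r : ℝ} (hr : 0 < r)
    (h : r ≤ dist f g) : ∃ i, r ≤ dist (f i) (g i) := by
  by_contra! hlt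
  exact ((dist_pi_lt_iff hr).2 hlt).not_ge h

lemma exists_forall_notMem_Ioo {ι : Type*} [Fintype ι] (y : ι → ℝ) (a : ι) {c : ℝ}
    (hc : 0 ≤ c) :
    ∃ i : Fin (Fintype.card ι), ∀ m, y m ∉ Set.Ioo (y a + i * c) (y a + (i + 1) * c) := by
  by_contra! hfull
  choose p hp using hfull
  have hmono : StrictMono (y ∘ p) := fun i i' hii' => by
    have hle : ((i : ℕ) : ℝ) + 1 ≤ (i' : ℕ) := by exact_mod_cast hii'
    calc y (p i) < y a + (i + 1) * c := (hp i).2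
      _ ≤ y a + i' * c := by gcongr
      _ < y (p i') := (hp i').1
  have hne : a ∉ Set.range p := fun ⟨i, hpa⟩ => by
    have := (hp i).1
    rw [hpa] at this
    linarith [mul_nonneg (Nat.cast_nonneg (i : ℕ)) hc]
  simpa using Fintype.card_lt_of_injective_of_notMem p hmono.injective.of_comp hne

lemma exists_cut_of_add_card_mul_le {ι : Type*} [Fintype ι] (y : ι → ℝ) {a b : ι} {c : ℝ}
    (hc : 0 < c) (hab : y a + Fintype.card ι * c ≤ y b) :
    ∃ J : Finset ι, a ∈ J ∧ b ∉ J ∧ ∀ j ∈ J, ∀ k ∉ J, y j + c ≤ y k := by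
  obtain ⟨i, hgap⟩ := exists_forall_notMem_Ioo y a hc.le
  have hi : ((i : ℕ) : ℝ) + 1 ≤ Fintype.card ι := by exact_mod_cast i.isLt
  refine ⟨univ.filter (y · ≤ y a + i * c), ?_, ?_, fun j hj k hk => ?_⟩
  · simp only [mem_filter, mem_univ, true_and]
    linarith [mul_nonneg (Nat.cast_nonneg (i : ℕ)) hc.le]
  · simp only [mem_filter, mem_univ, true_and, not_le]
    linarith [mul_le_mul_of_nonneg_right hi hc.le]
  · simp only [mem_filter, mem_univ, true_and, not_le] at hj hk
    have hk' : y a + (i + 1) * c ≤ y k := by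
      by_contra! hlt
      exact hgap k ⟨hk, hlt⟩
    linarith

theorem exists_partition_of_diam_ge_general {d n : ℕ}
    (x : Fin n → (Fin d → ℝ)) (L : ℝ) (hL : 0 < L)
    (hdiam : ∃ j k : Fin n, L ≤ dist (x j) (x k)) :
    ∃ J K : Finset (Fin n), J.Nonempty ∧ K.Nonempty ∧ Disjoint J K ∧ J ∪ K = Finset.univ ∧
      ∀ j ∈ J, ∀ k ∈ K, L / n ≤ dist (x j) (x k) := by
  obtain ⟨j, k, hjk⟩ := hdiam
  obtain ⟨i, hi⟩ := exists_le_dist_apply_of_le_dist hL hjk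
  have hn : (0 : ℝ) < n := Nat.cast_pos.2 j.pos
  obtain ⟨a, b, hab⟩ : ∃ a b, x a i + L ≤ x b i := by
    rcases le_abs'.1 (Real.dist_eq _ _ ▸ hi) with h | h
    · exact ⟨j, k, by linarith⟩
    · exact ⟨k, j, by linarith⟩
  obtain ⟨J, haJ, hbJ, hcut⟩ := exists_cut_of_add_card_mul_le (fun m => x m i)
    (div_pos hL hn) (by simpa [mul_div_cancel₀ _ hn.ne'] using hab)
  refine ⟨J, Jᶜ, ⟨a, haJ⟩, ⟨b, mem_compl.2 hbJ⟩, disjoint_compl_right, union_compl J,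
    fun j hj k hk => ?_⟩
  calc L / n ≤ x k i - x j i := by linarith [hcut j hj k (mem_compl.1 hk)]
    _ ≤ dist (x j i) (x k i) := by rw [dist_comm, Real.dist_eq]; exact le_abs_self _
    _ ≤ dist (x j) (x k) := dist_le_pi_dist _ _ i

/-- If `n` points in `ℝ^d` (with the max-norm) have diameter at least `L > 0`, then the index
set `{1,…,n}` can be partitioned into two nonempty pieces `J`, `K` such that any point indexed
by `J` is at distance at least `L/n` from any point indexed by `K`. -/
theorem exists_partition_of_diam_ge {d n : ℕ} (hn : 2 ≤ n)
    (x : Fin n → (Fin d → ℝ)) (L : ℝ) (hL : 0 < L)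
    (hdiam : ∃ j k : Fin n, L ≤ dist (x j) (x k)) :
    ∃ J K : Finset (Fin n), J.Nonempty ∧ K.Nonempty ∧ Disjoint J K ∧ J ∪ K = Finset.univ ∧
      ∀ j ∈ J, ∀ k ∈ K, L / n ≤ dist (x j) (x k) :=
  exists_partition_of_diam_ge_general x L hL hdiam
end
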